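/- arXiv:1806.10842 — 8 statements merged into one kernel-verified Lean document; each statement's English description precedes it below -/
import Mathlib

section
/- Let f be a monic irreducible polynomial with integer coefficients of degree n ≥ 2, let N = f(1), let ℓ be a prime number, and let π ∈ ℂ be a root of f. Then the complex number N/(ℓ·(1−π)) is integral over ℤ if and only if ℓ divides f'(1) and ℓ² divides N. -/
/-!
Put `y = π - 1`. Its minimal polynomial over `ℚ` is the Taylor shift `T = f(X + 1)`, which has
integer coefficients, `T(0) = f(1) = N`, `T'(0) = f'(1)` and degree `n`; and the number in question
is `-N / (ℓ y)`. If `x` has minimal polynomial `p` then `c / x` is a root of the reversed polynomial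
of `p` with roots scaled by `c`; since also `x = c / (c / x)`, the minimal polynomials of `x` and
`c / x` have the same degree, so normalising this polynomial gives the minimal polynomial of
`c / x`. For `c = N / ℓ` its coefficients are `T(k) N^(k-1) / ℓ^k`, and by Gauss's lemma
integrality over `ℤ` means that all of them are integers. The case `k = 1` is `ℓ ∣ f'(1)`; the case
`k = n` is `ℓ^n ∣ N^(n-1)`, which forces `ℓ² ∣ N`; and `ℓ² ∣ N` already gives `ℓ^k ∣ N^(k-1)` for
every `k ≥ 2`.
-/

open Polynomial

namespace Polynomial

theorem coeff_scaleRoots_reverse {R : Type*} [Semiring R] {p : R[X]} (hp : p.coeff 0 ≠ 0)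
    (s : R) {k : ℕ} (hk : k ≤ p.natDegree) :
    (p.reverse.scaleRoots s).coeff (p.natDegree - k) = p.coeff k * s ^ k := by
  rw [coeff_scaleRoots, coeff_reverse, reverse_natDegree,
    natTrailingDegree_eq_zero.mpr (.inr hp), revAt_le (Nat.sub_le _ _), Nat.sub_sub_self hk,
    Nat.sub_zero, Nat.sub_sub_self hk]

theorem C_inv_mul_scaleRoots_reverse_mem_lifts_iff {R K : Type*} [Semiring R] [Field K]
    (f : R →+* K) {p : K[X]} (hp : p.coeff 0 ≠ 0) (c : K) :
    C (p.coeff 0)⁻¹ * p.reverse.scaleRoots c ∈ lifts f ↔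
      ∀ k ≤ p.natDegree, p.coeff k * c ^ k / p.coeff 0 ∈ Set.range f := by
  have hcoeff {k : ℕ} (hk : k ≤ p.natDegree) :
      (C (p.coeff 0)⁻¹ * p.reverse.scaleRoots c).coeff (p.natDegree - k) =
        p.coeff k * c ^ k / p.coeff 0 := by
    rw [coeff_C_mul, coeff_scaleRoots_reverse hp c hk, inv_mul_eq_div]
  rw [lifts_iff_coeff_lifts]
  refine ⟨fun h k hk ↦ hcoeff hk ▸ h _, fun h i ↦ ?_⟩
  rcases le_or_gt i p.natDegree with hi | hi
  · rw [← Nat.sub_sub_self hi, hcoeff (Nat.sub_le _ _)]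
    exact h _ (Nat.sub_le _ _)
  · refine ⟨0, (map_zero f).trans (coeff_eq_zero_of_natDegree_lt ?_).symm⟩
    grw [natDegree_C_mul_le, natDegree_scaleRoots, reverse_natDegree_le]
    exact hi

theorem aeval_scaleRoots_reverse_eq_zero {K L : Type*} [Field K] [Field L] [Algebra K L]
    {p : K[X]} {x : L} (hx : aeval x p = 0) (hx0 : x ≠ 0) (c : K) :
    aeval (algebraMap K L c * x⁻¹) (p.reverse.scaleRoots c) = 0 := by
  let := invertibleOfNonzero hx0
  refine scaleRoots_aeval_eq_zero ?_
  rw [← invOf_eq_inv, aeval_def, eval₂_reverse_eq_zero_iff, ← aeval_def, hx]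

end Polynomial

namespace minpoly

variable {K L : Type*} [Field K] [Field L] [Algebra K L]

theorem natDegree_algebraMap_mul_inv_le {x : L} (hx : IsIntegral K x) (hx0 : x ≠ 0) (c : K) :
    (minpoly K (algebraMap K L c * x⁻¹)).natDegree ≤ (minpoly K x).natDegree := by
  have hne : (minpoly K x).reverse.scaleRoots c ≠ 0 :=
    scaleRoots_ne_zero (reverse_eq_zero.not.mpr (minpoly.ne_zero hx)) c
  calc _ ≤ ((minpoly K x).reverse.scaleRoots c).natDegree :=
        natDegree_le_of_dvd
          (minpoly.dvd K _ (aeval_scaleRoots_reverse_eq_zero (aeval K x) hx0 c)) hne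
    _ ≤ _ := (natDegree_scaleRoots _ c).trans_le (reverse_natDegree_le _)

theorem algebraMap_mul_inv {x : L} (hx : IsIntegral K x) (hx0 : x ≠ 0) {c : K} (hc : c ≠ 0) :
    minpoly K (algebraMap K L c * x⁻¹) =
      C ((minpoly K x).coeff 0)⁻¹ * (minpoly K x).reverse.scaleRoots c := by
  set y := algebraMap K L c * x⁻¹
  have hc' : algebraMap K L c ≠ 0 := (_root_.map_ne_zero _).mpr hc
  have hy : IsIntegral K y := isIntegral_algebraMap.mul hx.inv
  have hy0 : y ≠ 0 := mul_ne_zero hc' (inv_ne_zero hx0)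
  have hxy : algebraMap K L c * y⁻¹ = x := by rw [mul_inv, inv_inv, mul_inv_cancel_left₀ hc']
  have h0 : (minpoly K x).coeff 0 ≠ 0 := minpoly.coeff_zero_ne_zero hx hx0
  refine (eq_of_monic_of_dvd_of_natDegree_le (minpoly.monic hy) ?_ ?_ ?_).symm
  · rw [Monic, leadingCoeff_mul, leadingCoeff_C, leadingCoeff_scaleRoots, reverse_leadingCoeff,
      trailingCoeff, natTrailingDegree_eq_zero.mpr (.inr h0), inv_mul_cancel₀ h0]
  · refine minpoly.dvd K y ?_
    rw [map_mul, aeval_scaleRoots_reverse_eq_zero (aeval K x) hx0 c, mul_zero]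
  · calc _ ≤ (minpoly K x).natDegree := by
          grw [natDegree_C_mul_le, natDegree_scaleRoots, reverse_natDegree_le]
      _ ≤ _ := hxy ▸ natDegree_algebraMap_mul_inv_le hy hy0 c

theorem isIntegral_iff_mem_lifts {R S : Type*} (K : Type*) [CommRing R] [IsDomain R]
    [IsIntegrallyClosed R] [Field K] [Algebra R K] [IsFractionRing R K] [CommRing S] [IsDomain S]
    [Algebra R S] [Algebra K S] [IsScalarTower R K S] {s : S} (hs : IsIntegral K s) :
    IsIntegral R s ↔ minpoly K s ∈ lifts (algebraMap R K) := by
  refine ⟨fun h ↦ ⟨minpoly R s, (isIntegrallyClosed_eq_field_fractions' K h).symm⟩, fun h ↦ ?_⟩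
  obtain ⟨q, hq, -, hqm⟩ := lifts_and_natDegree_eq_and_monic h (minpoly.monic hs)
  exact ⟨q, hqm, by rw [← aeval_def, ← aeval_map_algebraMap K, hq, minpoly.aeval]⟩

end minpoly

theorem Rat.intCast_div_mem_range_iff {a b : ℤ} (hb : b ≠ 0) :
    (a / b : ℚ) ∈ Set.range ((↑) : ℤ → ℚ) ↔ b ∣ a := by
  refine ⟨fun ⟨m, hm⟩ ↦ ⟨m, ?_⟩, fun ⟨m, hm⟩ ↦ ⟨m, ?_⟩⟩
  · rw [eq_div_iff (by exact_mod_cast hb)] at hm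
    exact_mod_cast (mul_comm (b : ℚ) m ▸ hm).symm
  · rw [hm, Int.cast_mul, mul_div_cancel_left₀ _ (by exact_mod_cast hb)]

theorem Rat.intCast_mul_div_pow_div_mem_range_iff {ℓ N : ℤ} (hℓ : ℓ ≠ 0) (hN : N ≠ 0)
    (t : ℤ) {k : ℕ} (hk : k ≠ 0) :
    (t * (N / ℓ) ^ k / N : ℚ) ∈ Set.range ((↑) : ℤ → ℚ) ↔ ℓ ^ k ∣ t * N ^ (k - 1) := by
  obtain ⟨j, rfl⟩ := Nat.exists_eq_add_one_of_ne_zero hk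
  have hℓ' : (ℓ : ℚ) ≠ 0 := by exact_mod_cast hℓ
  have hN' : (N : ℚ) ≠ 0 := by exact_mod_cast hN
  have : (t * (N / ℓ) ^ (j + 1) / N : ℚ) = (t * N ^ j : ℤ) / (ℓ ^ (j + 1) : ℤ) := by
    push_cast
    rw [div_pow]
    field_simp
    ring
  rw [this, Rat.intCast_div_mem_range_iff (pow_ne_zero _ hℓ), Nat.add_sub_cancel]

theorem Int.sq_dvd_of_pow_dvd_pow_sub_one {p : ℕ} (hp : p.Prime) {m : ℤ} {n : ℕ} (hn : n ≠ 0)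
    (h : (p : ℤ) ^ n ∣ m ^ (n - 1)) : (p : ℤ) ^ 2 ∣ m := by
  have := Fact.mk hp
  rcases eq_or_ne m 0 with rfl | hm
  · exact dvd_zero _
  have hm' : m.natAbs ≠ 0 := Int.natAbs_ne_zero.mpr hm
  rw [← Int.natAbs_dvd_natAbs, Int.natAbs_pow, Int.natAbs_pow, Int.natAbs_natCast,
    padicValNat_dvd_iff_le (pow_ne_zero _ hm'), padicValNat.pow] at h
  rw [← Int.natAbs_dvd_natAbs, Int.natAbs_pow, Int.natAbs_natCast, padicValNat_dvd_iff_le hm']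
  by_contra! hv
  have : (n - 1) * padicValNat p m.natAbs ≤ (n - 1) * 1 := Nat.mul_le_mul_left _ (by omega)
  omega

theorem forall_pow_dvd_mul_pow_sub_one_iff {ℓ : ℕ} (hℓ : ℓ.Prime) {n : ℕ} (hn : 1 ≤ n) (M : ℤ)
    {t : ℕ → ℤ} (ht : t n = 1) :
    (∀ k, 1 ≤ k → k ≤ n → (ℓ : ℤ) ^ k ∣ t k * M ^ (k - 1)) ↔ (ℓ : ℤ) ∣ t 1 ∧ (ℓ : ℤ) ^ 2 ∣ M := by
  refine ⟨fun h ↦ ⟨by simpa using h 1 le_rfl hn, ?_⟩, fun ⟨h1, h2⟩ k hk1 hkn ↦ ?_⟩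
  · have := h n hn le_rfl
    rw [ht, one_mul] at this
    exact Int.sq_dvd_of_pow_dvd_pow_sub_one hℓ (by omega) this
  · rcases hk1.eq_or_lt with rfl | hk
    · simpa using h1
    · calc (ℓ : ℤ) ^ k ∣ ((ℓ : ℤ) ^ 2) ^ (k - 1) := by
            rw [← pow_mul]
            exact pow_dvd_pow _ (by omega)
        _ ∣ M ^ (k - 1) := pow_dvd_pow_of_dvd h2 _
        _ ∣ t k * M ^ (k - 1) := dvd_mul_left _ _

theorem isIntegral_coeff_zero_div_mul_iff {L : Type*} [Field L] [Algebra ℚ L] {y : L}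
    (hy0 : y ≠ 0) {T : ℤ[X]} (hTm : T.Monic) (hT : minpoly ℚ y = T.map (algebraMap ℤ ℚ))
    {ℓ : ℕ} (hℓ : ℓ.Prime) :
    IsIntegral ℤ ((T.coeff 0 : L) / (ℓ * y)) ↔ (ℓ : ℤ) ∣ T.coeff 1 ∧ (ℓ : ℤ) ^ 2 ∣ T.coeff 0 := by
  have hy : IsIntegral ℚ y := ⟨T.map _, hTm.map _, by rw [← aeval_def, ← hT, minpoly.aeval]⟩
  have hT0 : T.coeff 0 ≠ 0 := by
    simpa [hT] using minpoly.coeff_zero_ne_zero hy hy0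
  have hT0' : (T.map (algebraMap ℤ ℚ)).coeff 0 ≠ 0 := by simpa using hT0
  have hdeg : T.natDegree = (minpoly ℚ y).natDegree := by rw [hT, hTm.natDegree_map]
  set c : ℚ := T.coeff 0 / (ℓ : ℤ)
  have hc : c ≠ 0 := by simp [c, hT0, hℓ.ne_zero]
  have hdiv : (T.coeff 0 : L) / (ℓ * y) = algebraMap ℚ L c * y⁻¹ := by
    rw [map_div₀, map_intCast, map_intCast, Int.cast_natCast, div_mul_eq_div_div, div_eq_mul_inv]
  rw [hdiv, minpoly.isIntegral_iff_mem_lifts ℚ (isIntegral_algebraMap.mul hy.inv),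
    minpoly.algebraMap_mul_inv hy hy0 hc, hT, C_inv_mul_scaleRoots_reverse_mem_lifts_iff _ hT0',
    hTm.natDegree_map, ← forall_pow_dvd_mul_pow_sub_one_iff hℓ
      (hdeg ▸ minpoly.natDegree_pos hy) _ hTm.coeff_natDegree]
  refine forall_congr' fun k ↦ ?_
  rcases eq_or_ne k 0 with rfl | hk
  · simp only [pow_zero, mul_one, div_self hT0']
    exact iff_of_true (fun _ ↦ ⟨1, map_one _⟩) (fun h ↦ absurd h (by norm_num))
  · rw [coeff_map, coeff_map, algebraMap_int_eq, Int.coe_castRingHom,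
      Rat.intCast_mul_div_pow_div_mem_range_iff (by exact_mod_cast hℓ.ne_zero) hT0 _ hk]
    exact ⟨fun h _ ↦ h, fun h ↦ h (Nat.one_le_iff_ne_zero.mpr hk)⟩

/-- Let `f` be a monic irreducible polynomial with integer coefficients of
degree `n ≥ 2`, let `N = f(1)`, let `ℓ` be a prime number, and let `π ∈ ℂ` be a root of `f`.
Then `N / (ℓ * (1 - π))` is integral over `ℤ` if and only if `ℓ ∣ f'(1)` and `ℓ² ∣ N`. -/
theorem stmt_0 (f : Polynomial ℤ) (hmonic : f.Monic) (hirr : Irreducible f)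
    (hdeg : 2 ≤ f.natDegree) (ℓ : ℕ) (hℓ : ℓ.Prime) (π : ℂ)
    (hπ : Polynomial.aeval π f = 0) :
    IsIntegral ℤ (((f.eval 1 : ℤ) : ℂ) / ((ℓ : ℂ) * (1 - π))) ↔
      ((ℓ : ℤ) ∣ f.derivative.eval 1 ∧ (ℓ : ℤ) ^ 2 ∣ f.eval 1) := by
  have hminπ : minpoly ℚ π = f.map (algebraMap ℤ ℚ) :=
    (minpoly.eq_of_irreducible_of_monic
      (hmonic.irreducible_iff_irreducible_map_fraction_map.mp hirr)
      (by rw [aeval_map_algebraMap, hπ]) (hmonic.map _)).symm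
  have hmin : minpoly ℚ (π - algebraMap ℚ ℂ 1) = (taylor 1 f).map (algebraMap ℤ ℚ) := by
    rw [minpoly.sub_algebraMap, hminπ, map_taylor, taylor_apply, map_one, map_one, C_1]
  have hTm : (taylor 1 f).Monic := (leadingCoeff_taylor 1 f).trans hmonic
  have hy0 : π - algebraMap ℚ ℂ 1 ≠ 0 := fun h ↦ by
    have := congrArg natDegree hmin
    rw [h, minpoly.zero, natDegree_X, hTm.natDegree_map, natDegree_taylor] at this
    omega
  have key := isIntegral_coeff_zero_div_mul_iff hy0 hTm hmin hℓ
  rw [taylor_coeff_zero, taylor_coeff_one] at key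
  rw [← key, map_one, ← neg_sub π, mul_neg, div_neg, IsIntegral.neg_iff]
end

section
/- Let f₁ and f₂ be polynomials with integer coefficients and let ℓ be a prime number, and set f = f₁·f₂. Then (ℓ² divides f(1) and ℓ divides f'(1)) if and only if (ℓ divides both f₁(1) and f₂(1)) or (ℓ² divides f₁(1) and ℓ divides f₁'(1)) or (ℓ² divides f₂(1) and ℓ divides f₂'(1)). -/
lemma key_aux (p a b a' b' : ℤ) (hp : Prime p) :
    (p ^ 2 ∣ a * b ∧ p ∣ (a' * b + a * b')) ↔
      ((p ∣ a ∧ p ∣ b) ∨ (p ^ 2 ∣ a ∧ p ∣ a') ∨ (p ^ 2 ∣ b ∧ p ∣ b')) := by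
  constructor
  · rintro ⟨h2, h1⟩
    by_cases ha : p ∣ a
    · by_cases hb : p ∣ b
      · exact Or.inl ⟨ha, hb⟩
      · -- p ∤ b : p² ∣ a, p ∣ a'
        have h2a : p ^ 2 ∣ a := hp.pow_dvd_of_dvd_mul_right 2 hb h2
        have hab' : p ∣ a * b' := ha.mul_right b'
        have ha'b : p ∣ a' * b := by
          have := dvd_sub h1 hab'; simpa using this
        exact Or.inr (Or.inl ⟨h2a, (hp.dvd_mul.mp ha'b).resolve_right hb⟩)
    · have h2b : p ^ 2 ∣ b := hp.pow_dvd_of_dvd_mul_left 2 ha h2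
      have hb : p ∣ b := dvd_trans (dvd_pow_self p two_ne_zero) h2b
      have ha'b : p ∣ a' * b := hb.mul_left a'
      have hab' : p ∣ a * b' := by
        have := dvd_sub h1 ha'b; simpa using this
      exact Or.inr (Or.inr ⟨h2b, (hp.dvd_mul.mp hab').resolve_left ha⟩)
  · rintro (⟨ha, hb⟩ | ⟨h2a, ha'⟩ | ⟨h2b, hb'⟩)
    · exact ⟨by rw [pow_two]; exact mul_dvd_mul ha hb,
        dvd_add (hb.mul_left a') (ha.mul_right b')⟩
    · have ha : p ∣ a := dvd_trans (dvd_pow_self p two_ne_zero) h2a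
      exact ⟨dvd_mul_of_dvd_left h2a b, dvd_add (ha'.mul_right b) (ha.mul_right b')⟩
    · have hb : p ∣ b := dvd_trans (dvd_pow_self p two_ne_zero) h2b
      exact ⟨dvd_mul_of_dvd_right h2b a, dvd_add (hb.mul_left a') (hb'.mul_left a)⟩

/-- For integer polynomials `f₁, f₂`, a prime `ℓ`, and `f = f₁ * f₂`:
`ℓ² ∣ f(1)` and `ℓ ∣ f'(1)` iff `ℓ` divides both `f₁(1)` and `f₂(1)`, or `ℓ² ∣ f₁(1)` and
`ℓ ∣ f₁'(1)`, or `ℓ² ∣ f₂(1)` and `ℓ ∣ f₂'(1)`. -/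
theorem stmt_1 (f₁ f₂ : Polynomial ℤ) (ℓ : ℕ) (hℓ : ℓ.Prime) :
    ((ℓ : ℤ) ^ 2 ∣ (f₁ * f₂).eval 1 ∧ (ℓ : ℤ) ∣ (f₁ * f₂).derivative.eval 1) ↔
      (((ℓ : ℤ) ∣ f₁.eval 1 ∧ (ℓ : ℤ) ∣ f₂.eval 1) ∨
        ((ℓ : ℤ) ^ 2 ∣ f₁.eval 1 ∧ (ℓ : ℤ) ∣ f₁.derivative.eval 1) ∨
        ((ℓ : ℤ) ^ 2 ∣ f₂.eval 1 ∧ (ℓ : ℤ) ∣ f₂.derivative.eval 1)) := by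
  have hp : Prime (ℓ : ℤ) := Int.prime_iff_natAbs_prime.mpr (by simpa using hℓ)
  simpa [Polynomial.derivative_mul, mul_comm] using
    key_aux (ℓ : ℤ) (f₁.eval 1) (f₂.eval 1) (f₁.derivative.eval 1) (f₂.derivative.eval 1) hp
end

section
/- Let t, s be integers and n a positive integer such that t, s and n have no common prime factor (i.e., gcd(gcd(t,s), n) = 1). Let S be the set of prime numbers ℓ dividing n such that ℓ does not divide t·s (as integers). Then the number of units x of ℤ/nℤ such that t·x + s is again a unit of ℤ/nℤ, multiplied by ∏_{ℓ∈S}(ℓ−1), equals φ(n)·∏_{ℓ∈S}(ℓ−2), where φ is Euler's totient function. Equivalently, the proportion of units x with t·x+s a unit is ∏_{ℓ∈S}(ℓ−2)/(ℓ−1). -/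
/-!
By the Chinese remainder theorem the count is multiplicative in `n`, and so are both sides of
the identity. Modulo a prime power `p ^ k`, an element is a unit iff its reduction mod `p` is,
so the count is `p ^ (k - 1)` times the count in the field `ZMod p`. There `x` must avoid `0`
and the root `-s / t` of `t * x + s`: if `p ∤ t * s` these are two distinct residues, leaving
`p - 2`; if `p ∣ t * s`, the coprimality hypothesis makes exactly one of `t`, `s` vanish mod `p`,
and only `x = 0` is excluded, leaving `p - 1 = φ p`.
-/

open Finset Function

section AffineUnits

variable {R S : Type*} [CommRing R] [CommRing S]

def affineUnits (a b : R) : Set R := {x | IsUnit x ∧ IsUnit (a * x + b)}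

lemma preimage_affineUnits (e : R ≃+* S) (a b : R) :
    e ⁻¹' affineUnits (e a) (e b) = affineUnits a b := by
  ext x
  simp only [affineUnits, Set.mem_preimage, Set.mem_ofPred_eq, ← map_mul, ← map_add,
    MulEquiv.isUnit_map]

lemma affineUnits_prod (a b : R × S) :
    affineUnits a b = affineUnits a.1 b.1 ×ˢ affineUnits a.2 b.2 := by
  ext x
  simp only [affineUnits, Set.mem_ofPred_eq, Set.mem_prod, Prod.isUnit_iff, Prod.fst_add,
    Prod.snd_add, Prod.fst_mul, Prod.snd_mul]
  tauto

variable {K : Type*} [Field K]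

lemma affineUnits_eq_compl_pair {a : K} (ha : a ≠ 0) (b : K) :
    affineUnits a b = {0, -b / a}ᶜ := by
  ext x
  simp only [affineUnits, Set.mem_ofPred_eq, isUnit_iff_ne_zero, Set.mem_compl_iff,
    Set.mem_insert_iff, Set.mem_singleton_iff, not_or]
  rw [eq_div_iff ha, eq_neg_iff_add_eq_zero, mul_comm]

lemma affineUnits_zero_left {b : K} (hb : b ≠ 0) : affineUnits 0 b = {0}ᶜ := by
  ext x
  simp [affineUnits, hb]

lemma ncard_affineUnits_of_ne_zero [Finite K] {a b : K} (ha : a ≠ 0) (hb : b ≠ 0) :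
    (affineUnits a b).ncard = Nat.card K - 2 := by
  rw [affineUnits_eq_compl_pair ha, Set.ncard_compl, Set.ncard_pair]
  exact (div_ne_zero (neg_ne_zero.mpr hb) ha).symm

lemma ncard_affineUnits_of_mul_eq_zero [Finite K] {a b : K} (hab : a * b = 0)
    (hne : a ≠ 0 ∨ b ≠ 0) : (affineUnits a b).ncard = Nat.card K - 1 := by
  suffices affineUnits a b = {0}ᶜ by rw [this, Set.ncard_compl, Set.ncard_singleton]
  rcases mul_eq_zero.mp hab with rfl | rfl
  · exact affineUnits_zero_left (hne.resolve_left (not_not.mpr rfl))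
  · rw [affineUnits_eq_compl_pair (hne.resolve_right (not_not.mpr rfl)), neg_zero, zero_div,
      Set.pair_eq_singleton]

end AffineUnits

lemma AddMonoidHom.ncard_preimage_of_surjective {G H : Type*} [AddGroup G] [AddGroup H]
    (f : G →+ H) (hf : Surjective f) (A : Set H) :
    (f ⁻¹' A).ncard = Nat.card f.ker * A.ncard := by
  let e := QuotientAddGroup.quotientKerEquivOfSurjective f hf
  have : f ⁻¹' A = ((↑) : G → G ⧸ f.ker) ⁻¹' (e ⁻¹' A) := rfl
  rw [← Nat.card_coe_set_eq, this,
    Nat.card_congr (QuotientAddGroup.preimageMkEquivAddSubgroupProdSet _ _), Nat.card_prod,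
    Nat.card_coe_set_eq, Set.ncard_preimage_of_injective_subset_range e.injective
      (by simp [e.surjective.range_eq])]

namespace ZMod

lemma ncard_affineUnits_mul {m n : ℕ} (h : m.Coprime n) (a b : ℤ) :
    (affineUnits (a : ZMod (m * n)) b).ncard =
      (affineUnits (a : ZMod m) b).ncard * (affineUnits (a : ZMod n) b).ncard := by
  let e := chineseRemainder h
  rw [← preimage_affineUnits e, map_intCast, map_intCast, affineUnits_prod,
    Set.ncard_preimage_of_injective_subset_range e.injective (by simp [e.surjective.range_eq]),
    Set.ncard_prod]
  rfl

variable {p k : ℕ} [Fact p.Prime]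

lemma isUnit_castHom_prime_pow_iff (hk : k ≠ 0) (x : ZMod (p ^ k)) :
    IsUnit (castHom (dvd_pow_self p hk) (ZMod p) x) ↔ IsUnit x := by
  have hp := Fact.out (p := p.Prime)
  have : NeZero (p ^ k) := ⟨pow_ne_zero k hp.ne_zero⟩
  rw [← natCast_zmod_val x, map_natCast, isUnit_iff_ne_zero, Ne, natCast_eq_zero_iff,
    isUnit_natCast_iff_not_dvd_pow hp (Nat.pos_of_ne_zero hk)]

lemma ncard_affineUnits_prime_pow (hk : k ≠ 0) (a b : ℤ) :
    (affineUnits (a : ZMod (p ^ k)) b).ncard =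
      p ^ (k - 1) * (affineUnits (a : ZMod p) b).ncard := by
  have hp := Fact.out (p := p.Prime)
  have : NeZero (p ^ k) := ⟨pow_ne_zero k hp.ne_zero⟩
  let π := castHom (dvd_pow_self p hk) (ZMod p)
  have hsurj : Surjective π := castHom_surjective _
  have hpre : affineUnits (a : ZMod (p ^ k)) b =
      (π : ZMod (p ^ k) →+ ZMod p) ⁻¹' affineUnits (a : ZMod p) b := by
    ext x
    simp only [affineUnits, Set.mem_ofPred_eq, Set.mem_preimage, AddMonoidHom.coe_coe]
    rw [← isUnit_castHom_prime_pow_iff hk, ← isUnit_castHom_prime_pow_iff hk, map_add, map_mul,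
      map_intCast, map_intCast]
  have hker : Nat.card (π : ZMod (p ^ k) →+ ZMod p).ker = p ^ (k - 1) := by
    have h := AddMonoidHom.ncard_preimage_of_surjective (π : ZMod (p ^ k) →+ ZMod p) hsurj
      Set.univ
    rw [Set.preimage_univ, Set.ncard_univ, Set.ncard_univ, Nat.card_zmod, Nat.card_zmod] at h
    apply Nat.eq_of_mul_eq_mul_right hp.pos
    rw [← h, ← pow_succ, Nat.sub_one_add_one hk]
  rw [hpre, AddMonoidHom.ncard_preimage_of_surjective _ hsurj, hker]

lemma ncard_affineUnits_prime_of_not_dvd {a b : ℤ} (h : ¬ (p : ℤ) ∣ a * b) :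
    (affineUnits (a : ZMod p) b).ncard = p - 2 := by
  rw [ncard_affineUnits_of_ne_zero, Nat.card_zmod] <;>
    rw [Ne, intCast_zmod_eq_zero_iff_dvd] <;> intro hd <;> apply h
  exacts [hd.mul_right b, hd.mul_left a]

lemma ncard_affineUnits_prime_of_dvd {a b : ℤ} (h : (p : ℤ) ∣ a * b)
    (hcop : ¬ ((p : ℤ) ∣ a ∧ (p : ℤ) ∣ b)) :
    (affineUnits (a : ZMod p) b).ncard = p - 1 := by
  rw [ncard_affineUnits_of_mul_eq_zero, Nat.card_zmod]
  · rwa [← Int.cast_mul, intCast_zmod_eq_zero_iff_dvd]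
  · rwa [Ne, Ne, intCast_zmod_eq_zero_iff_dvd, intCast_zmod_eq_zero_iff_dvd, ← not_and_or]

end ZMod

def primesNotDividing (c : ℤ) (n : ℕ) : Finset ℕ :=
  n.primeFactors.filter fun ℓ => ¬ (ℓ : ℤ) ∣ c

lemma prod_primesNotDividing_mul {M : Type*} [CommMonoid M] (f : ℕ → M) (c : ℤ) {m n : ℕ}
    (h : m.Coprime n) :
    ∏ ℓ ∈ primesNotDividing c (m * n), f ℓ =
      (∏ ℓ ∈ primesNotDividing c m, f ℓ) * ∏ ℓ ∈ primesNotDividing c n, f ℓ := by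
  rw [primesNotDividing, h.primeFactors_mul, filter_union,
    prod_union (disjoint_filter_filter h.disjoint_primeFactors)]
  rfl

lemma primesNotDividing_prime_pow {c : ℤ} {p k : ℕ} (hp : p.Prime) (hk : k ≠ 0) :
    primesNotDividing c (p ^ k) = if (p : ℤ) ∣ c then ∅ else {p} := by
  rw [primesNotDividing, Nat.primeFactors_prime_pow hk hp, filter_singleton]
  split_ifs <;> simp_all

lemma ncard_affineUnits_mul_prod_prime_pow {p k : ℕ} [Fact p.Prime] (hk : k ≠ 0) {a b : ℤ}
    (hcop : ¬ ((p : ℤ) ∣ a ∧ (p : ℤ) ∣ b)) :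
    (affineUnits (a : ZMod (p ^ k)) b).ncard *
        ∏ ℓ ∈ primesNotDividing (a * b) (p ^ k), (ℓ - 1) =
      (p ^ k).totient * ∏ ℓ ∈ primesNotDividing (a * b) (p ^ k), (ℓ - 2) := by
  have hp := Fact.out (p := p.Prime)
  rw [primesNotDividing_prime_pow hp hk, ZMod.ncard_affineUnits_prime_pow hk,
    Nat.totient_prime_pow hp (Nat.pos_of_ne_zero hk)]
  split_ifs with hd
  · rw [ZMod.ncard_affineUnits_prime_of_dvd hd hcop, prod_empty, prod_empty]
  · rw [ZMod.ncard_affineUnits_prime_of_not_dvd hd, prod_singleton, prod_singleton]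
    ring

/-- Lemma 4 of the paper. Let `t, s` be integers and `n` a positive
integer with `gcd(gcd(t,s), n) = 1`. Let `S` be the set of primes `ℓ ∣ n` with `ℓ ∤ t·s`.
Then the number of units `x` of `ℤ/nℤ` such that `t·x + s` is again a unit, multiplied by
`∏_{ℓ∈S} (ℓ−1)`, equals `φ(n) · ∏_{ℓ∈S} (ℓ−2)`. -/
theorem stmt_4 (t s : ℤ) (n : ℕ) (hn : 0 < n)
    (hgcd : Nat.gcd (Int.gcd t s) n = 1) :
    Nat.card {x : ZMod n // IsUnit x ∧ IsUnit ((t : ZMod n) * x + (s : ZMod n))} *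
        ∏ ℓ ∈ n.primeFactors.filter (fun ℓ : ℕ => ¬ ((ℓ : ℤ) ∣ t * s)), (ℓ - 1) =
      Nat.totient n *
        ∏ ℓ ∈ n.primeFactors.filter (fun ℓ : ℕ => ¬ ((ℓ : ℤ) ∣ t * s)), (ℓ - 2) := by
  change (affineUnits (t : ZMod n) s).ncard * ∏ ℓ ∈ primesNotDividing (t * s) n, (ℓ - 1) =
    n.totient * ∏ ℓ ∈ primesNotDividing (t * s) n, (ℓ - 2)
  induction n using Nat.recOnPosPrimePosCoprime with
  | zero => exact absurd hn (lt_irrefl 0)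
  | one =>
    rw [show affineUnits (t : ZMod 1) s = Set.univ from
      Set.eq_univ_of_forall fun _ => ⟨isUnit_of_subsingleton _, isUnit_of_subsingleton _⟩]
    simp [primesNotDividing]
  | prime_pow p k hp hk =>
    have : Fact p.Prime := ⟨hp⟩
    refine ncard_affineUnits_mul_prod_prime_pow hk.ne' fun ⟨hpt, hps⟩ => ?_
    have hpg : p.Coprime (p ^ k) := Nat.Coprime.coprime_dvd_left (Int.dvd_gcd hpt hps) hgcd
    exact hp.coprime_iff_not_dvd.mp hpg (dvd_pow_self p hk.ne')
  | coprime a b ha hb hab iha ihb =>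
    rw [ZMod.ncard_affineUnits_mul hab, prod_primesNotDividing_mul _ _ hab,
      prod_primesNotDividing_mul _ _ hab, Nat.totient_mul hab, mul_mul_mul_comm,
      iha (by omega) (Nat.Coprime.coprime_dvd_right (dvd_mul_right a b) hgcd),
      ihb (by omega) (Nat.Coprime.coprime_dvd_right (dvd_mul_left b a) hgcd), mul_mul_mul_comm]
end

section
/- Let a, b and q be integers, and set N = 1 + a(q+1) + b + q² and J = 4 + a(q+3) + 2b. Then every prime number ℓ dividing both N and J divides the product (2a + b + 2)·(a² − 4a − 4b − 8). -/
/-- Proposition 5 of the paper, with the sign typo corrected.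
Let `a, b, q` be integers, `N = 1 + a(q+1) + b + q²` and `J = 4 + a(q+3) + 2b`.
Every prime `ℓ` dividing both `N` and `J` divides `(2a + b + 2)(a² − 4a − 4b − 8)`. -/
theorem stmt_6 (a b q : ℤ) (ℓ : ℕ) (hℓ : ℓ.Prime)
    (hN : (ℓ : ℤ) ∣ 1 + a * (q + 1) + b + q ^ 2)
    (hJ : (ℓ : ℤ) ∣ 4 + a * (q + 3) + 2 * b) :
    (ℓ : ℤ) ∣ (2 * a + b + 2) * (a ^ 2 - 4 * a - 4 * b - 8) := by
  obtain ⟨m, hm⟩ := hN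
  obtain ⟨n, hn⟩ := hJ
  have hp : Prime ((ℓ : ℤ)) := Nat.prime_iff_prime_int.mp hℓ
  have h1 : (ℓ : ℤ) ∣ (q - 1) * (a + 2 * q + 2) :=
    ⟨2 * m - n, by linear_combination 2 * hm - hn⟩
  rcases hp.dvd_mul.mp h1 with h | h
  · obtain ⟨k, hk⟩ := h
    exact Dvd.dvd.mul_right
      ⟨m - k * (a + q + 1), by linear_combination hm - (a + q + 1) * hk⟩ _
  · obtain ⟨k, hk⟩ := h
    exact Dvd.dvd.mul_left
      ⟨a * k - 2 * n, by linear_combination a * hk - 2 * hn⟩ _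
end

section
/- For every integer x and every prime number ℓ, it is not the case that ℓ divides 4x³ + 9x² − 3 and ℓ² divides x⁴ + 4x³ + 3x² − 2x − 1. -/
/-! `N(x) = f(1)` and `j(x) = f'(1)` for the Weil polynomial `f` of the isogeny class, with
`x = √q`. A Bézout identity shows that a common divisor of `N(x)` and `j(x)` divides `5`, and
modulo `25` one checks that `5 ∣ j(x)` forces `N(x) ≡ 5`, so `25 ∤ N(x)`. -/

section

variable {R : Type*} [CommRing R]

def weilEvalOne (x : R) : R := x ^ 4 + 4 * x ^ 3 + 3 * x ^ 2 - 2 * x - 1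

def weilDerivEvalOne (x : R) : R := 4 * x ^ 3 + 9 * x ^ 2 - 3

@[simp, norm_cast]
theorem Int.cast_weilEvalOne (x : ℤ) : ((weilEvalOne x : ℤ) : R) = weilEvalOne (x : R) := by
  simp [weilEvalOne]

@[simp, norm_cast]
theorem Int.cast_weilDerivEvalOne (x : ℤ) :
    ((weilDerivEvalOne x : ℤ) : R) = weilDerivEvalOne (x : R) := by
  simp [weilDerivEvalOne]

theorem weilEvalOne_bezout (x : R) :
    (1 - 14 * x - 8 * x ^ 2) * weilEvalOne x
      + (2 * x ^ 3 + 7 * x ^ 2 + 4 * x - 2) * weilDerivEvalOne x = 5 := by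
  simp only [weilEvalOne, weilDerivEvalOne]
  ring

theorem dvd_five_of_dvd_weilEvalOne_of_dvd_weilDerivEvalOne {d x : R}
    (hN : d ∣ weilEvalOne x) (hj : d ∣ weilDerivEvalOne x) : d ∣ 5 := by
  rw [← weilEvalOne_bezout x]
  exact dvd_add (hN.mul_left _) (hj.mul_left _)

end

theorem weilEvalOne_eq_five_of_five_mul_weilDerivEvalOne_eq_zero :
    ∀ y : ZMod 25, 5 * weilDerivEvalOne y = 0 → weilEvalOne y = 5 := by
  decide

theorem not_five_sq_dvd_weilEvalOne {x : ℤ} (hj : 5 ∣ weilDerivEvalOne x) :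
    ¬ 5 ^ 2 ∣ weilEvalOne x := by
  intro hN
  have hj25 : 5 * weilDerivEvalOne (x : ZMod 25) = 0 := by
    obtain ⟨k, hk⟩ := hj
    rw [← Int.cast_weilDerivEvalOne, hk, Int.cast_mul, ← mul_assoc]
    exact mul_eq_zero_of_left (by decide) _
  have hN25 : weilEvalOne (x : ZMod 25) = 0 := by
    rw [← Int.cast_weilEvalOne, ZMod.intCast_zmod_eq_zero_iff_dvd]
    exact_mod_cast hN
  have h5 := weilEvalOne_eq_five_of_five_mul_weilDerivEvalOne_eq_zero _ hj25
  rw [hN25] at h5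
  exact absurd h5 (by decide)

/-- For every integer `x` and every prime `ℓ`, it is not the case that
`ℓ ∣ 4x³ + 9x² − 3` and `ℓ² ∣ x⁴ + 4x³ + 3x² − 2x − 1`. -/
theorem stmt_8 (x : ℤ) (ℓ : ℕ) (hℓ : ℓ.Prime) :
    ¬ ((ℓ : ℤ) ∣ 4 * x ^ 3 + 9 * x ^ 2 - 3 ∧
        (ℓ : ℤ) ^ 2 ∣ x ^ 4 + 4 * x ^ 3 + 3 * x ^ 2 - 2 * x - 1) := by
  rintro ⟨hj : (ℓ : ℤ) ∣ weilDerivEvalOne x, hN2 : (ℓ : ℤ) ^ 2 ∣ weilEvalOne x⟩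
  have hN : (ℓ : ℤ) ∣ weilEvalOne x := (dvd_pow_self _ two_ne_zero).trans hN2
  have hℓ5 : ℓ = 5 := by
    have h := dvd_five_of_dvd_weilEvalOne_of_dvd_weilDerivEvalOne hN hj
    exact (Nat.prime_dvd_prime_iff_eq hℓ Nat.prime_five).mp (by exact_mod_cast h)
  subst hℓ5
  exact not_five_sq_dvd_weilEvalOne hj (mod_cast hN2)
end

section
/- Let m ≥ 2 be an integer and q = m². Set a₀ = 4m − 3 and b₀ = 6q − 6m + 1. Then: (i) |a₀| < 4m, 2|a₀|m − 2q < b₀, 4b₀ < a₀² + 8q, and a₀² − 4b₀ + 8q = 5, which is not a perfect square; (ii) for all integers a, b satisfying |a| < 4m, 2|a|m − 2q < b, 4b < a² + 8q, and such that a² − 4b + 8q is not a perfect square, one has 1 + a(q+1) + b + q² ≤ 1 + a₀(q+1) + b₀ + q² = m⁴ + 4m³ + 3m² − 2m − 1. -/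
/-- maximality step of Theorem 4 of the paper. Let `m ≥ 2`, `q = m²`,
`a₀ = 4m − 3` and `b₀ = 6q − 6m + 1`. Then (i) `(a₀, b₀)` satisfies Rück's conditions:
`|a₀| < 4m`, `2|a₀|m − 2q < b₀`, `4b₀ < a₀² + 8q`, and `a₀² − 4b₀ + 8q = 5` is not a perfect
square; and (ii) every `(a, b)` satisfying those conditions has
`1 + a(q+1) + b + q² ≤ 1 + a₀(q+1) + b₀ + q² = m⁴ + 4m³ + 3m² − 2m − 1`. -/
theorem stmt_9 (m : ℤ) (hm : 2 ≤ m) (q a₀ b₀ : ℤ)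
    (hq : q = m ^ 2) (ha₀ : a₀ = 4 * m - 3) (hb₀ : b₀ = 6 * q - 6 * m + 1) :
    (|a₀| < 4 * m ∧ 2 * |a₀| * m - 2 * q < b₀ ∧ 4 * b₀ < a₀ ^ 2 + 8 * q ∧
        a₀ ^ 2 - 4 * b₀ + 8 * q = 5 ∧ ¬ IsSquare (5 : ℤ)) ∧
      (∀ a b : ℤ, |a| < 4 * m → 2 * |a| * m - 2 * q < b → 4 * b < a ^ 2 + 8 * q →
        ¬ IsSquare (a ^ 2 - 4 * b + 8 * q) →
        1 + a * (q + 1) + b + q ^ 2 ≤ 1 + a₀ * (q + 1) + b₀ + q ^ 2) ∧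
      1 + a₀ * (q + 1) + b₀ + q ^ 2 = m ^ 4 + 4 * m ^ 3 + 3 * m ^ 2 - 2 * m - 1 := by
  subst hq ha₀ hb₀
  have habs : |4 * m - 3| = 4 * m - 3 := abs_of_nonneg (by linarith)
  refine ⟨⟨by rw [habs]; linarith, by rw [habs]; nlinarith, by nlinarith, by ring, ?_⟩,
    ?_, by ring⟩
  · rintro ⟨r, hr⟩
    have h1 : 0 ≤ (r - 2) ^ 2 := sq_nonneg _
    have h2 : 0 ≤ (r + 2) ^ 2 := sq_nonneg _
    have hr' : r * r = 5 := hr.symm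
    have hb1 : r ≤ 2 := by nlinarith
    have hb2 : -2 ≤ r := by nlinarith
    interval_cases r <;> omega
  · intro a b h1 h2 h3 h4
    rw [abs_lt] at h1; obtain ⟨h1l, h1r⟩ := h1
    set k : ℤ := a ^ 2 - 4 * b + 8 * m ^ 2 with hk
    have hkpos : 0 < k := by simp [hk]; linarith
    rcases Int.even_or_odd a with ⟨c, hc⟩ | ⟨c, hc⟩
    · -- a even : k ≡ 0 mod 4, k ≠ 4 so k ≥ 8
      have hmod : k = 4 * (c ^ 2 - b + 2 * m ^ 2) := by rw [hk, hc]; ring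
      have hne4 : k ≠ 4 := by
        intro h; exact h4 ⟨2, by rw [hk] at h ⊢; omega⟩
      have hk8 : 8 ≤ k := by omega
      -- hence 4b ≤ a² + 8m² - 8
      have hb : 4 * b ≤ a ^ 2 + 8 * m ^ 2 - 8 := by omega
      rcases lt_or_ge a (4 * m - 3) with hlt | hge
      · have hfac : 0 ≤ (4 * m - 4 - a) * (a + 4 * m ^ 2 + 4 * m) := by
          apply mul_nonneg <;> nlinarith
        nlinarith
      · -- a ∈ {4m-3, 4m-2, 4m-1}; a even so a = 4m-2 (since 4m-3, 4m-1 odd)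
        have hapos : 0 < a := by linarith
        rw [abs_of_pos hapos] at h2
        have ha : a = 4 * m - 2 := by omega
        exfalso; subst ha; nlinarith
    · -- a odd : k ≡ 1 mod 4, k ≠ 1 so k ≥ 5
      have hmod : k = 4 * (c ^ 2 + c - b + 2 * m ^ 2) + 1 := by rw [hk, hc]; ring
      have hne1 : k ≠ 1 := by
        intro h; exact h4 ⟨1, by rw [hk] at h ⊢; omega⟩
      have hk5 : 5 ≤ k := by omega
      have hb : 4 * b ≤ a ^ 2 + 8 * m ^ 2 - 5 := by omega
      rcases le_or_gt a (4 * m - 3) with hle | hgt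
      · have hfac : 0 ≤ (4 * m - 3 - a) * (a + 4 * m - 3 + 4 * (m ^ 2 + 1)) := by
          apply mul_nonneg <;> nlinarith
        nlinarith
      · -- a ∈ {4m-2, 4m-1}, odd so a = 4m-1 : contradiction with h2
        have hapos : 0 < a := by linarith
        rw [abs_of_pos hapos] at h2
        have ha : a = 4 * m - 1 := by omega
        exfalso; subst ha; nlinarith
end

section
/- Let p be a prime, r ≥ 1 an integer, q = p^r with q > 4, and b an integer such that gcd(q² − 2q + b − 3, 2(b − 4)) = 1. Let s = ∏_{ℓ} (ℓ − 1), the product running over the distinct prime divisors ℓ of |2(b − 4)|. Then for every integer i ≥ 0, setting q_i = p^{r + i·s}, one has gcd(q_i² − 2q_i + b − 3, 2(b − 4)) = 1. -/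
/-! Every prime `ℓ` dividing `2(b − 4)` has `ℓ − 1 ∣ s`, so by Fermat
`p^(r + i s) ≡ p^r (mod ℓ)` (both sides vanish when `ℓ ∣ p`, as `r ≥ 1`). Hence
`q_i² − 2q_i + b − 3 ≡ q² − 2q + b − 3 (mod ℓ)`, and `ℓ` cannot divide the former.
For `b = 4` the modulus vanishes and the hypothesis would read `(q − 1)² = ±1`. -/

theorem Int.gcd_eq_one_of_forall_prime_dvd_modEq {a a₀ m : ℤ} (h₀ : Int.gcd a₀ m = 1)
    (h : ∀ ℓ : ℕ, ℓ.Prime → (ℓ : ℤ) ∣ m → a ≡ a₀ [ZMOD ℓ]) : Int.gcd a m = 1 := by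
  rw [Int.gcd_eq_natAbs] at h₀ ⊢
  refine Nat.coprime_of_dvd fun ℓ hℓ hℓa hℓm => ?_
  have hℓa₀ : (ℓ : ℤ) ∣ a₀ :=
    ((h ℓ hℓ (Int.natCast_dvd.mpr hℓm)).dvd_iff).mp (Int.natCast_dvd.mpr hℓa)
  exact hℓ.not_dvd_one (h₀ ▸ Nat.dvd_gcd (Int.natCast_dvd.mp hℓa₀) hℓm)

theorem ZMod.pow_add_eq_pow_of_sub_one_dvd {ℓ : ℕ} [Fact ℓ.Prime] (a : ZMod ℓ) {r n : ℕ}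
    (hr : r ≠ 0) (hn : ℓ - 1 ∣ n) : a ^ (r + n) = a ^ r := by
  obtain ⟨k, rfl⟩ := hn
  rcases eq_or_ne a 0 with rfl | ha
  · rw [zero_pow hr, zero_pow (by omega)]
  · rw [pow_add, pow_mul, ZMod.pow_card_sub_one_eq_one ha, one_pow, mul_one]

theorem stmt_10_general (p : ℕ) (r : ℕ) (hr : 1 ≤ r) (q : ℕ) (hq : q = p ^ r)
    (hq4 : 4 < q) (b : ℤ)
    (hgcd : Int.gcd ((q : ℤ) ^ 2 - 2 * (q : ℤ) + b - 3) (2 * (b - 4)) = 1)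
    (s : ℕ) (hs : s = ∏ ℓ ∈ (2 * (b - 4)).natAbs.primeFactors, (ℓ - 1)) :
    ∀ i : ℕ,
      Int.gcd (((p : ℤ) ^ (r + i * s)) ^ 2 - 2 * (p : ℤ) ^ (r + i * s) + b - 3)
        (2 * (b - 4)) = 1 := by
  intro i
  have hB : 2 * (b - 4) ≠ 0 := by
    intro hB
    obtain rfl : b = 4 := by omega
    rw [hB, Int.gcd_zero_right] at hgcd
    have hq' : (4 : ℤ) < q := by exact_mod_cast hq4
    rcases Int.natAbs_eq_iff.mp hgcd with h | h <;> push_cast at h <;> nlinarith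
  refine Int.gcd_eq_one_of_forall_prime_dvd_modEq hgcd fun ℓ hℓ hℓB => ?_
  have := Fact.mk hℓ
  have hℓs : ℓ - 1 ∣ s := hs ▸ Finset.dvd_prod_of_mem _
    (Nat.mem_primeFactors.mpr ⟨hℓ, Int.natCast_dvd.mp hℓB, Int.natAbs_ne_zero.mpr hB⟩)
  rw [← ZMod.intCast_eq_intCast_iff]
  push_cast [hq]
  rw [ZMod.pow_add_eq_pow_of_sub_one_dvd _ (by omega) (hℓs.mul_left i)]

/-- arithmetic core of Proposition 6 of the paper. Let `p` be a prime,
`r ≥ 1`, `q = p^r > 4` and `b` an integer with `gcd(q² − 2q + b − 3, 2(b − 4)) = 1`.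
Let `s = ∏ (ℓ − 1)` over the distinct prime divisors `ℓ` of `|2(b − 4)|`. Then for every
`i ≥ 0`, setting `q_i = p^{r + i·s}`, one has `gcd(q_i² − 2q_i + b − 3, 2(b − 4)) = 1`. -/
theorem stmt_10 (p : ℕ) (hp : p.Prime) (r : ℕ) (hr : 1 ≤ r) (q : ℕ) (hq : q = p ^ r)
    (hq4 : 4 < q) (b : ℤ)
    (hgcd : Int.gcd ((q : ℤ) ^ 2 - 2 * (q : ℤ) + b - 3) (2 * (b - 4)) = 1)
    (s : ℕ) (hs : s = ∏ ℓ ∈ (2 * (b - 4)).natAbs.primeFactors, (ℓ - 1)) :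
    ∀ i : ℕ,
      Int.gcd (((p : ℤ) ^ (r + i * s)) ^ 2 - 2 * (p : ℤ) ^ (r + i * s) + b - 3)
        (2 * (b - 4)) = 1 :=
  stmt_10_general p r hr q hq hq4 b hgcd s hs
end

section
/- Let b be an integer with b > −2 and b ≢ 2 (mod 4), let p be an odd prime with p > b + 2, and let r ≥ 1 be an integer with gcd(p^{2r} − 1, b + 2) = 1. Let s = ∏_{ℓ} (ℓ − 1), the product running over the distinct prime divisors ℓ of b + 2. Then for every integer i ≥ 0 and every prime ℓ, it is not the case that ℓ divides 2(b + 2) and ℓ² divides p^{2(r + i·s)} + b + 1. -/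
/-!
Write `k = r + i s`. For `ℓ = 2`: `p^{2k} ≡ 1 (mod 4)` since `p` is odd, so
`4 ∣ p^{2k} + b + 1` would give `4 ∣ b + 2`, i.e. `b ≡ 2 (mod 4)`. For odd `ℓ`: `ℓ ∣ b + 2`
and `ℓ ∣ p^{2k} + b + 1` give `p^{2k} ≡ 1 (mod ℓ)`; as `ℓ - 1 ∣ s`, Fermat's little theorem
turns this into `p^{2r} ≡ 1 (mod ℓ)`, so `ℓ ∣ gcd(p^{2r} - 1, b + 2) = 1`.
-/

theorem Int.not_four_dvd_sq_add_add_one {b x : ℤ} (hb : b % 4 ≠ 2) (hx : Odd x) :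
    ¬ 4 ∣ x ^ 2 + b + 1 := by
  have := Int.sq_mod_four_eq_one_of_odd hx
  omega

theorem FiniteField.pow_eq_one_of_pow_add_mul_eq_one {K : Type*} [Field K] [Fintype K]
    {x : K} {r i s : ℕ} (hs : Fintype.card K - 1 ∣ s) (h : x ^ (r + i * s) = 1) :
    x ^ r = 1 := by
  rcases eq_or_ne x 0 with rfl | hx
  · obtain ⟨rfl, -⟩ := Nat.add_eq_zero_iff.mp (zero_pow_eq_one₀.mp h)
    exact pow_zero 0
  · obtain ⟨c, rfl⟩ := hs
    rwa [pow_add, mul_comm i, pow_mul, pow_mul, FiniteField.pow_card_sub_one_eq_one x hx,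
      one_pow, one_pow, mul_one] at h

theorem Int.dvd_pow_sub_one_of_dvd_pow_add_mul_sub_one {ℓ : ℕ} (hℓ : ℓ.Prime) {x : ℤ}
    {r i s : ℕ} (hs : ℓ - 1 ∣ s) (h : (ℓ : ℤ) ∣ x ^ (r + i * s) - 1) :
    (ℓ : ℤ) ∣ x ^ r - 1 := by
  have := Fact.mk hℓ
  rw [← ZMod.intCast_zmod_eq_zero_iff_dvd, Int.cast_sub, Int.cast_pow, Int.cast_one,
    sub_eq_zero] at h ⊢
  exact FiniteField.pow_eq_one_of_pow_add_mul_eq_one (by rwa [ZMod.card]) h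

theorem stmt_11_general (b : ℤ) (hb4 : b % 4 ≠ 2) (p : ℕ) (hodd : Odd p) (r : ℕ)
    (hgcd : Int.gcd ((p : ℤ) ^ (2 * r) - 1) (b + 2) = 1)
    (s : ℕ) (hs : s = ∏ ℓ ∈ (b + 2).natAbs.primeFactors, (ℓ - 1)) :
    ∀ i : ℕ, ∀ ℓ : ℕ, ℓ.Prime →
      ¬ ((ℓ : ℤ) ∣ 2 * (b + 2) ∧ (ℓ : ℤ) ^ 2 ∣ (p : ℤ) ^ (2 * (r + i * s)) + b + 1) := by
  intro i ℓ hℓ ⟨hdvd, hsq⟩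
  rcases eq_or_ne ℓ 2 with rfl | hℓ2
  · rw [pow_mul'] at hsq
    exact Int.not_four_dvd_sq_add_add_one hb4 hodd.natCast.pow (by norm_num at hsq; exact hsq)
  rw [pow_mul] at hsq hgcd
  have hℓb : (ℓ : ℤ) ∣ b + 2 := by
    refine (Int.Prime.dvd_mul' hℓ hdvd).resolve_left fun h ↦ hℓ2 ?_
    exact (Nat.prime_dvd_prime_iff_eq hℓ Nat.prime_two).mp (by exact_mod_cast h)
  have hℓs : ℓ - 1 ∣ s := hs ▸ Finset.dvd_prod_of_mem _ <| Nat.mem_primeFactors.mpr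
    ⟨hℓ, Int.natCast_dvd.mp hℓb, by omega⟩ -- `b + 2 ≠ 0` because `b % 4 ≠ 2`
  have hk : (ℓ : ℤ) ∣ ((p : ℤ) ^ 2) ^ (r + i * s) - 1 := by
    rw [show ((p : ℤ) ^ 2) ^ (r + i * s) - 1 = ((p : ℤ) ^ 2) ^ (r + i * s) + b + 1 - (b + 2) by
      ring]
    exact dvd_sub ((dvd_pow_self (ℓ : ℤ) two_ne_zero).trans hsq) hℓb
  have hgcd_dvd := Int.dvd_coe_gcd
    (Int.dvd_pow_sub_one_of_dvd_pow_add_mul_sub_one hℓ hℓs hk) hℓb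
  rw [hgcd, Nat.cast_one, Int.natCast_dvd_ofNat, Nat.dvd_one] at hgcd_dvd
  exact hℓ.one_lt.ne' hgcd_dvd

/-- arithmetic core of Proposition 7 of the paper. Let `b > −2` with
`b ≢ 2 (mod 4)`, let `p` be an odd prime with `p > b + 2`, and let `r ≥ 1` satisfy
`gcd(p^{2r} − 1, b + 2) = 1`. Let `s = ∏ (ℓ − 1)` over the distinct prime divisors `ℓ` of
`b + 2`. Then for every `i ≥ 0` and every prime `ℓ`, it is not the case that
`ℓ ∣ 2(b + 2)` and `ℓ² ∣ p^{2(r + i·s)} + b + 1`. -/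
theorem stmt_11 (b : ℤ) (hb : -2 < b) (hb4 : b % 4 ≠ 2) (p : ℕ) (hp : p.Prime)
    (hodd : Odd p) (hpb : b + 2 < (p : ℤ)) (r : ℕ) (hr : 1 ≤ r)
    (hgcd : Int.gcd ((p : ℤ) ^ (2 * r) - 1) (b + 2) = 1)
    (s : ℕ) (hs : s = ∏ ℓ ∈ (b + 2).natAbs.primeFactors, (ℓ - 1)) :
    ∀ i : ℕ, ∀ ℓ : ℕ, ℓ.Prime →
      ¬ ((ℓ : ℤ) ∣ 2 * (b + 2) ∧ (ℓ : ℤ) ^ 2 ∣ (p : ℤ) ^ (2 * (r + i * s)) + b + 1) :=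
  stmt_11_general b hb4 p hodd r hgcd s hs
end
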